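/- Let M² ⊂ ℝ³ be a surface with unit normal N, shape operator s, and v a vector field on ℝ³ tangent to M. Then ((L_N v^♭)^♯)^T = (L_N v)^T − 2sv at points of M, where T denotes tangential projection; consequently the Navier condition (TN)_tan = 0 and the Hodge condition i_M^*(L_N v^♭) = 0 differ exactly by the term 2sv, recovering (TN)_tan = curl v × N + 2sv. -/

import Mathlib

noncomputable section

abbrev R3 := Fin 3 → ℝ

def dot3 (u v : R3) : ℝ := u 0 * v 0 + u 1 * v 1 + u 2 * v 2

def cross3 (u v : R3) : R3 :=
  ![u 1 * v 2 - u 2 * v 1, u 2 * v 0 - u 0 * v 2, u 0 * v 1 - u 1 * v 0]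

def e3 (i : Fin 3) : R3 := Pi.single i 1

def curl3 (v : R3 → R3) (p : R3) : R3 :=
  ![fderiv ℝ v p (e3 1) 2 - fderiv ℝ v p (e3 2) 1,
    fderiv ℝ v p (e3 2) 0 - fderiv ℝ v p (e3 0) 2,
    fderiv ℝ v p (e3 0) 1 - fderiv ℝ v p (e3 1) 0]

/-- The transpose of a continuous linear map on Euclidean ℝ³, applied to a vector:
`(Lᵀ w)ᵢ = ⟪w, L eᵢ⟫`. -/
def transp3 (L : R3 →L[ℝ] R3) (w : R3) : R3 :=
  ![dot3 w (L (e3 0)), dot3 w (L (e3 1)), dot3 w (L (e3 2))]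

/- ### Auxiliary lemmas -/

lemma dot3_comm (u v : R3) : dot3 u v = dot3 v u := by simp only [dot3]; ring

lemma vec_decomp (u : R3) : u = u 0 • e3 0 + u 1 • e3 1 + u 2 • e3 2 := by
  funext i
  fin_cases i <;>
    simp [e3, Pi.single, Function.update]

lemma clm_decomp (L : R3 →L[ℝ] R3) (u : R3) :
    L u = u 0 • L (e3 0) + u 1 • L (e3 1) + u 2 • L (e3 2) := by
  conv_lhs => rw [vec_decomp u]
  simp [map_add, map_smul]

lemma dot3_transp (L : R3 →L[ℝ] R3) (w u : R3) :
    dot3 (transp3 L w) u = dot3 w (L u) := by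
  rw [clm_decomp L u]
  simp only [transp3, dot3, Matrix.cons_val_zero, Matrix.cons_val_one, Matrix.head_cons,
    Matrix.cons_val_two, Matrix.tail_cons, Pi.add_apply, Pi.smul_apply, smul_eq_mul]
  ring

lemma dot3_self_eq_zero {u : R3} (h : dot3 u u = 0) : u = 0 := by
  simp only [dot3] at h
  have h0 : u 0 = 0 := by nlinarith [sq_nonneg (u 0), sq_nonneg (u 1), sq_nonneg (u 2)]
  have h1 : u 1 = 0 := by nlinarith [sq_nonneg (u 0), sq_nonneg (u 1), sq_nonneg (u 2)]
  have h2 : u 2 = 0 := by nlinarith [sq_nonneg (u 0), sq_nonneg (u 1), sq_nonneg (u 2)]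
  funext i
  fin_cases i <;> first | exact h0 | exact h1 | exact h2

/-- A vector orthogonal to every tangent vector is a multiple of the unit normal. -/
lemma perp_of_dot (n w : R3) (hn : dot3 n n = 1)
    (h : ∀ u : R3, dot3 u n = 0 → dot3 w u = 0) : w = dot3 w n • n := by
  have hn' := hn
  simp only [dot3] at hn'
  have hun : dot3 (w - dot3 w n • n) n = 0 := by
    simp only [dot3, Pi.sub_apply, Pi.smul_apply, smul_eq_mul]
    linear_combination (-(w 0 * n 0 + w 1 * n 1 + w 2 * n 2)) * hn'
  have hwu : dot3 w (w - dot3 w n • n) = 0 := h _ hun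
  have huu : dot3 (w - dot3 w n • n) (w - dot3 w n • n) = 0 := by
    simp only [dot3, Pi.sub_apply, Pi.smul_apply, smul_eq_mul] at hwu hun ⊢
    linear_combination hwu - (w 0 * n 0 + w 1 * n 1 + w 2 * n 2) * hun
  exact sub_eq_zero.mp (dot3_self_eq_zero huu)

lemma hasDerivAt_dot3 {f g : ℝ → R3} {f' g' : R3} {t : ℝ}
    (hf : HasDerivAt f f' t) (hg : HasDerivAt g g' t) :
    HasDerivAt (fun s => dot3 (f s) (g s)) (dot3 f' (g t) + dot3 (f t) g') t := by
  have hfi := hasDerivAt_pi.mp hf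
  have hgi := hasDerivAt_pi.mp hg
  have h := (((hfi 0).mul (hgi 0)).add ((hfi 1).mul (hgi 1))).add ((hfi 2).mul (hgi 2))
  refine HasDerivAt.congr_deriv (f := fun s => dot3 (f s) (g s)) h ?_
  simp only [dot3]; ring

lemma dot3_sub_left (u v w : R3) : dot3 (u - v) w = dot3 u w - dot3 v w := by
  simp only [dot3, Pi.sub_apply]; ring

lemma dot3_add_left (u v w : R3) : dot3 (u + v) w = dot3 u w + dot3 v w := by
  simp only [dot3, Pi.add_apply]; ring

/-- Let `M² ⊂ ℝ³` be a surface with unit normal `N`, shape operator `s X = −∇̃_X N`, and `v` a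
vector field on ℝ³ tangent to `M`.  Then `((L_N v♭)♯)^T = (L_N v)^T − 2sv` at points of `M`
(here `(L_N v♭)♯ = ∇̃_N v + (∇̃N)ᵀ v`), and consequently the Navier and Hodge conditions differ
exactly by `2sv`, recovering `(TN)_tan = curl v × N + 2sv` with
`(TN)_tan = (∇̃v(N) + (∇̃v)ᵀ(N))_tan`. -/
theorem lie_form_vs_lie_vector_and_traction (M : Set R3) (v N : R3 → R3) (p : R3)
    (hp : p ∈ M)
    (hv : DifferentiableAt ℝ v p) (hN : DifferentiableAt ℝ N p)
    (hunit : ∀ᶠ x in nhds p, dot3 (N x) (N x) = 1)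
    (htan : ∀ x ∈ M, dot3 (v x) (N x) = 0)
    (hsym : ∀ u w : R3, dot3 u (N p) = 0 → dot3 w (N p) = 0 →
      dot3 (fderiv ℝ N p u) w = dot3 (fderiv ℝ N p w) u)
    (hcurve : ∀ u : R3, dot3 u (N p) = 0 →
      ∃ γ : ℝ → R3, γ 0 = p ∧ (∀ t, γ t ∈ M) ∧ HasDerivAt γ u 0) :
    let tang : R3 → R3 := fun w => w - dot3 w (N p) • N p
    let sv : R3 := -(fderiv ℝ N p (v p))
    tang (fderiv ℝ v p (N p) + transp3 (fderiv ℝ N p) (v p)) =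
        tang (fderiv ℝ v p (N p) - fderiv ℝ N p (v p)) - (2 : ℝ) • sv ∧
      tang (fderiv ℝ v p (N p) + transp3 (fderiv ℝ v p) (N p)) =
        cross3 (curl3 v p) (N p) + (2 : ℝ) • sv := by
  intro tang sv
  have hnn : dot3 (N p) (N p) = 1 := hunit.self_of_nhds
  have hvn : dot3 (v p) (N p) = 0 := htan p hp
  -- lines through p
  have hline : ∀ u : R3, HasDerivAt (fun t : ℝ => p + t • u) u 0 := fun u => by
    simpa using ((hasDerivAt_id (0 : ℝ)).smul_const u).const_add p
  have hNl : ∀ u : R3, HasDerivAt (fun t : ℝ => N (p + t • u)) (fderiv ℝ N p u) 0 := by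
    intro u
    have h0 : HasFDerivAt N (fderiv ℝ N p) ((fun t : ℝ => p + t • u) 0) := by
      simpa using hN.hasFDerivAt
    exact h0.comp_hasDerivAt 0 (hline u)
  -- F1 : ∇N has image tangent to M (from |N| = 1 near p)
  have F1 : ∀ u : R3, dot3 (fderiv ℝ N p u) (N p) = 0 := by
    intro u
    have hd := hasDerivAt_dot3 (hNl u) (hNl u)
    have hcont : Filter.Tendsto (fun t : ℝ => p + t • u) (nhds 0) (nhds p) := by
      have hc : Continuous (fun t : ℝ => p + t • u) := by continuity
      simpa using hc.tendsto 0
    have hev : (fun t : ℝ => dot3 (N (p + t • u)) (N (p + t • u))) =ᶠ[nhds (0 : ℝ)]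
        fun _ => (1 : ℝ) := hcont.eventually hunit
    have h1 : HasDerivAt (fun t : ℝ => dot3 (N (p + t • u)) (N (p + t • u))) 0 0 :=
      (hasDerivAt_const 0 (1 : ℝ)).congr_of_eventuallyEq hev
    have hu := hd.unique h1
    simp only [zero_smul, add_zero] at hu
    rw [dot3_comm (N p) (fderiv ℝ N p u)] at hu
    linarith
  -- F3 : differentiating v ⋅ N = 0 along curves in M
  have F3 : ∀ u : R3, dot3 u (N p) = 0 →
      dot3 (fderiv ℝ v p u) (N p) + dot3 (v p) (fderiv ℝ N p u) = 0 := by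
    intro u hu
    obtain ⟨γ, hγ0, hγM, hγ'⟩ := hcurve u hu
    have hvγ : HasDerivAt (fun t => v (γ t)) (fderiv ℝ v p u) 0 := by
      have h0 : HasFDerivAt v (fderiv ℝ v p) (γ 0) := by rw [hγ0]; exact hv.hasFDerivAt
      exact h0.comp_hasDerivAt 0 hγ'
    have hNγ : HasDerivAt (fun t => N (γ t)) (fderiv ℝ N p u) 0 := by
      have h0 : HasFDerivAt N (fderiv ℝ N p) (γ 0) := by rw [hγ0]; exact hN.hasFDerivAt
      exact h0.comp_hasDerivAt 0 hγ'
    have hd := hasDerivAt_dot3 hvγ hNγ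
    have h1 : HasDerivAt (fun t => dot3 (v (γ t)) (N (γ t))) 0 0 := by
      have he : (fun t => dot3 (v (γ t)) (N (γ t))) = fun _ => (0 : ℝ) :=
        funext fun t => htan _ (hγM t)
      rw [he]; exact hasDerivAt_const 0 0
    have := hd.unique h1
    rw [hγ0] at this
    linarith
  -- decomposition of (∇N)ᵀ v
  have hxa : transp3 (fderiv ℝ N p) (v p) - fderiv ℝ N p (v p) =
      dot3 (transp3 (fderiv ℝ N p) (v p) - fderiv ℝ N p (v p)) (N p) • N p := by
    refine perp_of_dot _ _ hnn ?_
    intro u hu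
    rw [dot3_sub_left, dot3_transp]
    have h1 := dot3_comm (v p) (fderiv ℝ N p u)
    have h2 := hsym u (v p) hu hvn
    linarith
  -- decomposition of (∇v)ᵀ N
  have hya : transp3 (fderiv ℝ v p) (N p) + fderiv ℝ N p (v p) =
      dot3 (transp3 (fderiv ℝ v p) (N p) + fderiv ℝ N p (v p)) (N p) • N p := by
    refine perp_of_dot _ _ hnn ?_
    intro u hu
    rw [dot3_add_left, dot3_transp]
    have h1 := dot3_comm (N p) (fderiv ℝ v p u)
    have h2 := F3 u hu
    have h3 := hsym (v p) u hvn hu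
    have h4 := dot3_comm (v p) (fderiv ℝ N p u)
    linarith
  obtain ⟨c1, hat3⟩ : ∃ c : ℝ, transp3 (fderiv ℝ N p) (v p) =
      c • N p + fderiv ℝ N p (v p) := ⟨_, sub_eq_iff_eq_add.mp hxa⟩
  obtain ⟨c2, hbt3⟩ : ∃ c : ℝ, transp3 (fderiv ℝ v p) (N p) =
      c • N p - fderiv ℝ N p (v p) := ⟨_, eq_sub_of_add_eq hya⟩
  -- c2 = ⟪N, ∇_N v⟫
  have hc2 : c2 = dot3 (N p) (fderiv ℝ v p (N p)) := by
    have h1 : dot3 (transp3 (fderiv ℝ v p) (N p)) (N p) = dot3 (N p) (fderiv ℝ v p (N p)) :=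
      dot3_transp _ _ _
    rw [hbt3, dot3_sub_left] at h1
    have h2 := F1 (v p)
    simp only [dot3, Pi.smul_apply, smul_eq_mul] at h1 h2 hnn ⊢
    linear_combination h1 + h2 - c2 * hnn
  -- curl identity : curl v × N = ∇_N v − (∇v)ᵀ N
  have hcross : cross3 (curl3 v p) (N p) =
      fderiv ℝ v p (N p) - transp3 (fderiv ℝ v p) (N p) := by
    rw [clm_decomp (fderiv ℝ v p) (N p)]
    funext i
    fin_cases i <;>
    · simp [cross3, curl3, transp3, dot3]
      ring
  have hb := F1 (v p)
  constructor
  · show (fderiv ℝ v p (N p) + transp3 (fderiv ℝ N p) (v p)) -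
        dot3 (fderiv ℝ v p (N p) + transp3 (fderiv ℝ N p) (v p)) (N p) • N p =
      ((fderiv ℝ v p (N p) - fderiv ℝ N p (v p)) -
        dot3 (fderiv ℝ v p (N p) - fderiv ℝ N p (v p)) (N p) • N p) -
      (2 : ℝ) • (-(fderiv ℝ N p (v p)))
    rw [hat3]
    funext i
    simp only [dot3, Pi.add_apply, Pi.sub_apply, Pi.smul_apply, Pi.neg_apply,
      smul_eq_mul] at hb hnn ⊢
    linear_combination (-(c1) * N p i) * hnn + (-(2 : ℝ) * N p i) * hb
  · show (fderiv ℝ v p (N p) + transp3 (fderiv ℝ v p) (N p)) -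
        dot3 (fderiv ℝ v p (N p) + transp3 (fderiv ℝ v p) (N p)) (N p) • N p =
      cross3 (curl3 v p) (N p) + (2 : ℝ) • (-(fderiv ℝ N p (v p)))
    rw [hcross, hbt3]
    funext i
    simp only [dot3, Pi.add_apply, Pi.sub_apply, Pi.smul_apply, Pi.neg_apply,
      smul_eq_mul] at hb hnn hc2 ⊢
    linear_combination (N p i) * hc2 + (-(c2) * N p i) * hnn + (N p i) * hb
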